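/- arXiv:1403.5548 — 3 statements merged into one kernel-verified Lean document; each statement's English description precedes it below -/
import Mathlib

section
/- Let p be a prime with p ≡ 1 (mod 4). Among the elements of multiplicative order 4 modulo p, at most one is a fixed point of the self-power map; i.e., F_4(p) ≤ 1. -/
/-!
An element of order 4 in `ZMod p` squares to `-1`, so the two elements of order 4 are `±a`,
represented by `a` and `p - a`. A fixed point `x ^ x = x` of order 4 satisfies `x ≡ 1 [MOD 4]`;
since `p ≡ 1 [MOD 4]`, the residues `a` and `p - a` cannot both be `≡ 1 [MOD 4]`.
-/

theorem sq_eq_neg_one_of_orderOf_eq_four {R : Type*} [Ring R] [NoZeroDivisors R] {x : R}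
    (hx : orderOf x = 4) : x ^ 2 = -1 := by
  have hsq : x ^ 2 * x ^ 2 = 1 := by
    rw [← pow_add, show 2 + 2 = orderOf x by omega, pow_orderOf_eq_one]
  refine (mul_self_eq_one_iff.mp hsq).resolve_left fun h ↦ ?_
  have := orderOf_dvd_of_pow_eq_one h
  rw [hx] at this
  norm_num at this

theorem IsOfFinOrder.modEq_one_of_pow_eq_self {M : Type*} [Monoid M] {x : M} {n : ℕ}
    (hx : IsOfFinOrder x) (h : x ^ n = x) : n ≡ 1 [MOD orderOf x] :=
  hx.pow_eq_pow_iff_modEq.mp (by rwa [pow_one])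

theorem ZMod.add_eq_of_natCast_eq_neg {p a b : ℕ} (ha : 0 < a) (hap : a < p)
    (hbp : b < p) (h : (a : ZMod p) = -b) : a + b = p := by
  have hdvd : p ∣ a + b := by
    rw [← ZMod.natCast_eq_zero_iff, Nat.cast_add, h, neg_add_cancel]
  exact Nat.eq_of_dvd_of_lt_two_mul (by omega) hdvd (by omega)

theorem at_most_one_fixed_point_of_order_four (p : ℕ) (hp : p.Prime)
    (h4 : p % 4 = 1) :
    ((Finset.Icc 1 (p - 1)).filter (fun x : ℕ => orderOf (x : ZMod p) = 4 ∧
        (x : ZMod p) ^ x = (x : ZMod p))).card ≤ 1 := by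
  have : Fact p.Prime := ⟨hp⟩
  have fixed_modEq_one {x : ℕ} (hx : orderOf (x : ZMod p) = 4) (hfix : (x : ZMod p) ^ x = x) :
      x % 4 = 1 := by
    have hfin : IsOfFinOrder (x : ZMod p) := orderOf_pos_iff.mp (by omega)
    simpa [Nat.ModEq, hx] using hfin.modEq_one_of_pow_eq_self hfix
  rw [Finset.card_le_one]
  simp only [Finset.mem_filter, Finset.mem_Icc]
  rintro a ⟨⟨ha1, hap⟩, horda, hfixa⟩ b ⟨⟨hb1, hbp⟩, hordb, hfixb⟩
  have hsq : (a : ZMod p) ^ 2 = (b : ZMod p) ^ 2 := by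
    rw [sq_eq_neg_one_of_orderOf_eq_four horda, sq_eq_neg_one_of_orderOf_eq_four hordb]
  rcases sq_eq_sq_iff_eq_or_eq_neg.mp hsq with heq | hneg
  · rwa [ZMod.natCast_eq_natCast_iff', Nat.mod_eq_of_lt (by omega),
      Nat.mod_eq_of_lt (by omega)] at heq
  · have hsum := ZMod.add_eq_of_natCast_eq_neg (by omega) (by omega) (by omega) hneg
    have := fixed_modEq_one horda hfixa
    have := fixed_modEq_one hordb hfixb
    omega
end

section
/- Let p be a prime with p ≡ 1 (mod 6). The number of fixed points of the self-power map of multiplicative order 6 is either 0 or 2; i.e., F_6(p) ∈ {0, 2}. -/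
/-!
Fixed points of order 6 are the `x ≡ 1 (mod 6)` whose residue has order 6, and such a residue `a`
is a root of `X² - X + 1`. The two roots sum to `1`, so the residues `a` and `1 - a = a⁵` are both
of order 6 and distinct. Hence, as soon as some `x` is a fixed point of order 6, the fixed points of
order 6 are exactly `x` and `p + 1 - x`.
-/

noncomputable def selfPowerFixedPoints (p d : ℕ) : Finset ℕ :=
  (Finset.Icc 1 (p - 1)).filter (fun x : ℕ => orderOf (x : ZMod p) = d ∧
    (x : ZMod p) ^ x = (x : ZMod p))

section Monoid

variable {M : Type*} [Monoid M]

theorem pow_eq_self_iff_orderOf_dvd_sub_one {a : M} (ha : 0 < orderOf a) {n : ℕ} (hn : 1 ≤ n) :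
    a ^ n = a ↔ orderOf a ∣ n - 1 := by
  have hunit : IsUnit a := (orderOf_pos_iff.mp ha).isUnit
  calc a ^ n = a ↔ a ^ (n - 1) * a = 1 * a := by rw [← pow_succ, Nat.sub_add_cancel hn, one_mul]
    _ ↔ orderOf a ∣ n - 1 := by rw [hunit.mul_left_inj, orderOf_dvd_iff_pow_eq_one]

end Monoid

section Ring

variable {R : Type*} [CommRing R] [NoZeroDivisors R]

theorem sq_eq_sub_one_of_orderOf_eq_six {a : R} (ha : orderOf a = 6) : a ^ 2 = a - 1 := by
  have hpow : ∀ n, a ^ n = 1 → 6 ∣ n := fun n h => ha ▸ orderOf_dvd_of_pow_eq_one h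
  have hcube : a ^ 3 = -1 := by
    have hsix : a ^ 6 = 1 := ha ▸ pow_orderOf_eq_one a
    have : (a ^ 3 - 1) * (a ^ 3 + 1) = 0 := by linear_combination hsix
    rcases mul_eq_zero.mp this with h | h
    · exact absurd (hpow 3 (by linear_combination h)) (by norm_num)
    · linear_combination h
  have : (a + 1) * (a ^ 2 - a + 1) = 0 := by linear_combination hcube
  rcases mul_eq_zero.mp this with h | h
  · exact absurd (hpow 2 (by linear_combination (a - 1) * h)) (by norm_num)
  · linear_combination h

omit [NoZeroDivisors R] in
theorem one_sub_eq_pow_five_of_sq_eq_sub_one {a : R} (ha : a ^ 2 = a - 1) : 1 - a = a ^ 5 := by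
  linear_combination (-(a ^ 3) - a ^ 2 + 1) * ha

theorem orderOf_one_sub_of_orderOf_eq_six {a : R} (ha : orderOf a = 6) : orderOf (1 - a) = 6 := by
  rw [one_sub_eq_pow_five_of_sq_eq_sub_one (sq_eq_sub_one_of_orderOf_eq_six ha),
    orderOf_pow' a (by norm_num), ha]
  rfl

theorem one_sub_ne_self_of_orderOf_eq_six {a : R} (ha : orderOf a = 6) : 1 - a ≠ a := by
  intro h
  rw [one_sub_eq_pow_five_of_sq_eq_sub_one (sq_eq_sub_one_of_orderOf_eq_six ha),
    pow_eq_self_iff_orderOf_dvd_sub_one (by omega) (by norm_num), ha] at h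
  norm_num at h

theorem eq_or_eq_one_sub_of_sq_eq_sub_one {a b : R} (ha : a ^ 2 = a - 1) (hb : b ^ 2 = b - 1) :
    b = a ∨ b = 1 - a := by
  have : (b - a) * (b - (1 - a)) = 0 := by linear_combination hb - ha
  rcases mul_eq_zero.mp this with h | h
  · exact .inl (by linear_combination h)
  · exact .inr (by linear_combination h)

end Ring

theorem mem_selfPowerFixedPoints {p d x : ℕ} (hd : 0 < d) :
    x ∈ selfPowerFixedPoints p d ↔
      x ∈ Finset.Icc 1 (p - 1) ∧ orderOf (x : ZMod p) = d ∧ d ∣ x - 1 := by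
  simp only [selfPowerFixedPoints, Finset.mem_filter, Finset.mem_Icc]
  constructor
  · rintro ⟨hx, hord, hfix⟩
    exact ⟨hx, hord, hord ▸ (pow_eq_self_iff_orderOf_dvd_sub_one (hord ▸ hd) hx.1).mp hfix⟩
  · rintro ⟨hx, hord, hdvd⟩
    exact ⟨hx, hord, (pow_eq_self_iff_orderOf_dvd_sub_one (hord ▸ hd) hx.1).mpr (hord ▸ hdvd)⟩

theorem natCast_injOn_Icc (p : ℕ) :
    Set.InjOn (Nat.cast : ℕ → ZMod p) (Finset.Icc 1 (p - 1) : Set ℕ) := by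
  intro x hx y hy hxy
  simp only [Finset.coe_Icc, Set.mem_Icc] at hx hy
  rw [ZMod.natCast_eq_natCast_iff' x y p, Nat.mod_eq_of_lt (by omega),
    Nat.mod_eq_of_lt (by omega)] at hxy
  exact hxy

theorem natCast_add_one_sub {p x : ℕ} (hx : x ≤ p + 1) :
    ((p + 1 - x : ℕ) : ZMod p) = 1 - x := by
  rw [Nat.cast_sub hx]
  push_cast
  rw [ZMod.natCast_self, zero_add]

theorem two_le_of_mem_selfPowerFixedPoints_six {p x : ℕ} (hx : x ∈ selfPowerFixedPoints p 6) :
    2 ≤ x ∧ x ≤ p - 1 := by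
  obtain ⟨hIcc, hord, -⟩ := (mem_selfPowerFixedPoints (by norm_num)).mp hx
  rw [Finset.mem_Icc] at hIcc
  have hx1 : x ≠ 1 := by rintro rfl; simp at hord
  omega

section Prime

variable {p : ℕ} [Fact p.Prime]

theorem add_one_sub_mem_selfPowerFixedPoints_six (h6 : p % 6 = 1) {x : ℕ}
    (hx : x ∈ selfPowerFixedPoints p 6) : p + 1 - x ∈ selfPowerFixedPoints p 6 := by
  obtain ⟨-, hord, hdvd⟩ := (mem_selfPowerFixedPoints (by norm_num)).mp hx
  have hbounds := two_le_of_mem_selfPowerFixedPoints_six hx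
  refine (mem_selfPowerFixedPoints (by norm_num)).mpr
    ⟨Finset.mem_Icc.mpr ⟨by omega, by omega⟩, ?_, by omega⟩
  rw [natCast_add_one_sub (by omega)]
  exact orderOf_one_sub_of_orderOf_eq_six hord

theorem add_one_sub_ne_self_of_mem_selfPowerFixedPoints_six {x : ℕ}
    (hx : x ∈ selfPowerFixedPoints p 6) : p + 1 - x ≠ x := by
  obtain ⟨-, hord, -⟩ := (mem_selfPowerFixedPoints (by norm_num)).mp hx
  have hbounds := two_le_of_mem_selfPowerFixedPoints_six hx
  intro h
  apply one_sub_ne_self_of_orderOf_eq_six hord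
  rw [← natCast_add_one_sub (by omega), h]

theorem eq_or_eq_add_one_sub_of_mem_selfPowerFixedPoints_six {x y : ℕ}
    (hx : x ∈ selfPowerFixedPoints p 6) (hy : y ∈ selfPowerFixedPoints p 6) :
    y = x ∨ y = p + 1 - x := by
  obtain ⟨hxIcc, hxord, -⟩ := (mem_selfPowerFixedPoints (by norm_num)).mp hx
  obtain ⟨hyIcc, hyord, -⟩ := (mem_selfPowerFixedPoints (by norm_num)).mp hy
  have hbounds := two_le_of_mem_selfPowerFixedPoints_six hx
  have hrefl : p + 1 - x ∈ Finset.Icc 1 (p - 1) := Finset.mem_Icc.mpr ⟨by omega, by omega⟩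
  refine (eq_or_eq_one_sub_of_sq_eq_sub_one (sq_eq_sub_one_of_orderOf_eq_six hxord)
    (sq_eq_sub_one_of_orderOf_eq_six hyord)).imp (natCast_injOn_Icc p hyIcc hxIcc) fun h => ?_
  rw [← natCast_add_one_sub (by omega)] at h
  exact natCast_injOn_Icc p hyIcc hrefl h

theorem selfPowerFixedPoints_six_eq_pair (h6 : p % 6 = 1) {x : ℕ}
    (hx : x ∈ selfPowerFixedPoints p 6) : selfPowerFixedPoints p 6 = {x, p + 1 - x} := by
  refine Finset.Subset.antisymm (fun y hy => ?_) ?_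
  · simpa using eq_or_eq_add_one_sub_of_mem_selfPowerFixedPoints_six hx hy
  · simpa [Finset.insert_subset_iff] using
      ⟨hx, add_one_sub_mem_selfPowerFixedPoints_six h6 hx⟩

end Prime

theorem fixed_points_of_order_six_zero_or_two (p : ℕ) (hp : p.Prime)
    (h6 : p % 6 = 1) :
    ((Finset.Icc 1 (p - 1)).filter (fun x : ℕ => orderOf (x : ZMod p) = 6 ∧
        (x : ZMod p) ^ x = (x : ZMod p))).card = 0 ∨
    ((Finset.Icc 1 (p - 1)).filter (fun x : ℕ => orderOf (x : ZMod p) = 6 ∧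
        (x : ZMod p) ^ x = (x : ZMod p))).card = 2 := by
  have : Fact p.Prime := ⟨hp⟩
  change (selfPowerFixedPoints p 6).card = 0 ∨ (selfPowerFixedPoints p 6).card = 2
  rcases (selfPowerFixedPoints p 6).eq_empty_or_nonempty with hempty | ⟨x, hx⟩
  · exact .inl (by rw [hempty, Finset.card_empty])
  · right
    rw [selfPowerFixedPoints_six_eq_pair h6 hx,
      Finset.card_pair (add_one_sub_ne_self_of_mem_selfPowerFixedPoints_six hx).symm]
end

section
/- Let p be a prime. The number G(p) of solutions x to x^x ≡ x (mod p) with 1 ≤ x ≤ (p-1)p and p ∤ x equals (p-1) · ∑_{n ∣ p-1} φ(n)/n, where φ is Euler's totient function. -/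
/-!
Fix a unit `u` of `ZMod p`. A natural number `x` reducing to `u` satisfies `x ^ x = x` iff
`x ≡ 1 [MOD orderOf u]`. As `orderOf u ∣ p - 1` is prime to `p`, the Chinese remainder theorem makes
these `x` a single residue class modulo `p * orderOf u`, which meets `[1, (p - 1) p]` in exactly
`(p - 1) / orderOf u` points. Summing over the cyclic group `(ZMod p)ˣ`, which has `φ d` elements of
each order `d ∣ p - 1`, gives the formula.
-/

open Finset

namespace Nat

theorem card_filter_Icc_modEq {N : ℕ} (hN : 0 < N) (K v : ℕ) :
    #{x ∈ Icc 1 (K * N) | x ≡ v [MOD N]} = K := by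
  have hper : Function.Periodic (· ≡ v [MOD N]) (K * N) := fun x => by
    simp only [Nat.ModEq, Nat.add_mul_mod_self_right]
  rw [← Finset.Ico_add_one_right_eq_Icc, add_comm, filter_Ico_card_eq_of_periodic _ _ _ hper,
    count_modEq_card _ hN]
  simp [Nat.mul_div_cancel _ hN]

theorem card_filter_Icc_modEq_and_modEq {m n : ℕ} (hmn : m.Coprime n) (h : 0 < m * n)
    (K a b : ℕ) : #{x ∈ Icc 1 (K * (m * n)) | x ≡ a [MOD m] ∧ x ≡ b [MOD n]} = K := by
  obtain ⟨c, hca, hcb⟩ := chineseRemainder hmn a b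
  have hcrt : ∀ x, x ≡ a [MOD m] ∧ x ≡ b [MOD n] ↔ x ≡ c [MOD m * n] := fun x => by
    rw [← modEq_and_modEq_iff_modEq_mul hmn]
    exact and_congr ⟨fun hx => hx.trans hca.symm, fun hx => hx.trans hca⟩
      ⟨fun hx => hx.trans hcb.symm, fun hx => hx.trans hcb⟩
  simp_rw [hcrt]
  exact card_filter_Icc_modEq h K c

end Nat

theorem pow_eq_self_iff_modEq_one {G : Type*} [LeftCancelMonoid G] {x : G} {n : ℕ} :
    x ^ n = x ↔ n ≡ 1 [MOD orderOf x] := by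
  rw [← pow_eq_pow_iff_modEq, pow_one]

theorem IsCyclic.sum_univ_orderOf {G M : Type*} [Group G] [Fintype G] [IsCyclic G]
    [AddCommMonoid M] (f : ℕ → M) :
    ∑ g : G, f (orderOf g) = ∑ d ∈ (Fintype.card G).divisors, d.totient • f d := by
  have hmaps : ∀ g ∈ (univ : Finset G), orderOf g ∈ (Fintype.card G).divisors := fun g _ =>
    Nat.mem_divisors.mpr ⟨orderOf_dvd_card, Fintype.card_ne_zero⟩
  rw [← sum_fiberwise_of_maps_to hmaps]
  refine sum_congr rfl fun d hd => ?_
  rw [sum_congr rfl fun g hg => congrArg f (mem_filter.mp hg).2, sum_const,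
    IsCyclic.card_orderOf_eq_totient (Nat.mem_divisors.mp hd).1]

namespace ZMod

theorem natCast_pow_self_eq_self_and_eq_iff {n : ℕ} [Fact (1 < n)] (u : (ZMod n)ˣ) (x : ℕ) :
    ((¬ n ∣ x ∧ (x : ZMod n) ^ x = x) ∧ (x : ZMod n) = u) ↔
      x ≡ (u : ZMod n).val [MOD n] ∧ x ≡ 1 [MOD orderOf u] := by
  have hval : (x : ZMod n) = u ↔ x ≡ (u : ZMod n).val [MOD n] := by
    rw [← natCast_eq_natCast_iff, natCast_zmod_val]
  have hpow : (x : ZMod n) = u → ((x : ZMod n) ^ x = x ↔ x ≡ 1 [MOD orderOf u]) := fun hx => by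
    rw [← pow_eq_self_iff_modEq_one, hx, ← Units.val_pow_eq_pow_val, Units.val_inj]
  have hndvd : (x : ZMod n) = u → ¬ n ∣ x := fun hx hdvd => by
    rw [← natCast_eq_zero_iff, hx] at hdvd
    exact u.ne_zero hdvd
  constructor
  · rintro ⟨⟨-, hx⟩, hxu⟩
    exact ⟨hval.mp hxu, (hpow hxu).mp hx⟩
  · rintro ⟨hxu, hx⟩
    have hxu := hval.mpr hxu
    exact ⟨⟨hndvd hxu, (hpow hxu).mpr hx⟩, hxu⟩

theorem card_filter_pow_self_eq_self_and_eq {p : ℕ} [Fact p.Prime] (u : (ZMod p)ˣ) :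
    #{x ∈ Icc 1 ((p - 1) * p) | (¬ p ∣ x ∧ (x : ZMod p) ^ x = x) ∧ (x : ZMod p) = u} =
      (p - 1) / orderOf u := by
  have hp := (Fact.out : p.Prime)
  have hdvd : orderOf u ∣ p - 1 := card_units p ▸ orderOf_dvd_card
  have hcop : p.Coprime (orderOf u) :=
    ((Nat.coprime_self_sub_right hp.one_le).mpr (Nat.coprime_one_right p)).coprime_dvd_right hdvd
  have hrange : (p - 1) * p = (p - 1) / orderOf u * (p * orderOf u) := by
    obtain ⟨k, hk⟩ := hdvd
    rw [hk, Nat.mul_div_cancel_left k (orderOf_pos u)]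
    ring
  simp_rw [natCast_pow_self_eq_self_and_eq_iff, hrange]
  exact Nat.card_filter_Icc_modEq_and_modEq hcop (Nat.mul_pos hp.pos (orderOf_pos u)) _ _ _

end ZMod

theorem count_fixed_points_extended_range (p : ℕ) (hp : p.Prime) :
    ((Finset.Icc 1 ((p - 1) * p)).filter (fun x : ℕ => ¬ p ∣ x ∧
        (x : ZMod p) ^ x = (x : ZMod p))).card =
      ∑ n ∈ (p - 1).divisors, ((p - 1) / n) * n.totient := by
  have := Fact.mk hp
  have hunit : ∀ x ∈ (Icc 1 ((p - 1) * p)).filter (fun x : ℕ => ¬ p ∣ x ∧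
      (x : ZMod p) ^ x = (x : ZMod p)),
      (x : ZMod p) ∈ univ.map ⟨((↑) : (ZMod p)ˣ → ZMod p), Units.val_injective⟩ := by
    intro x hx
    obtain ⟨u, hu⟩ : IsUnit (x : ZMod p) := isUnit_iff_ne_zero.mpr
      (by rw [Ne, ZMod.natCast_eq_zero_iff]; exact (mem_filter.mp hx).2.1)
    exact mem_map.mpr ⟨u, mem_univ u, hu⟩
  rw [card_eq_sum_card_fiberwise hunit, sum_map]
  simp_rw [filter_filter]
  simp only [Function.Embedding.coeFn_mk, ZMod.card_filter_pow_self_eq_self_and_eq]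
  rw [IsCyclic.sum_univ_orderOf (fun d => (p - 1) / d), ZMod.card_units]
  simp_rw [smul_eq_mul, mul_comm]
end
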